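/- Let D^b = (Ω^b,B^b) be the Boolean quadruple system of order 2^m, where m ≥ 2. Then: (i) every 3-element subset of Ω^b is a collinear triple of D^b, so the collinear triples form a regular two-graph on Ω^b; (ii) D^b satisfies (△); and (iii) for any ∞ ∈ Ω^b, the hole-stabilizer π_∞(D^b) is trivial and the Conway groupoid L_∞(D^b) is an elementary abelian group of order 2^m (indeed, it equals the group of translations v ↦ v+w of F_2^m). -/

import Mathlib

open Equiv

variable {Ω : Type*}

/-- `(Ω, B)` is a `2-(n,4,lam)` design: `Ω` has `n` points, every line has 4 points,
and every 2-element subset of `Ω` is contained in exactly `lam` lines. -/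
def IsDesign [Fintype Ω] (B : Set (Finset Ω)) (n lam : ℕ) : Prop :=
  Fintype.card Ω = n ∧
  (∀ L ∈ B, L.card = 4) ∧
  (∀ p : Finset Ω, p.card = 2 → {L ∈ B | p ⊆ L}.ncard = lam)

/-- A design is supersimple if any two distinct lines intersect in at most two points. -/
def Supersimple [DecidableEq Ω] (B : Set (Finset Ω)) : Prop :=
  ∀ L₁ ∈ B, ∀ L₂ ∈ B, L₁ ≠ L₂ → (L₁ ∩ L₂).card ≤ 2

/-- Condition (△): the symmetric difference of two lines meeting in two points is a line. -/
def SymmDiffCond [DecidableEq Ω] (B : Set (Finset Ω)) : Prop :=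
  ∀ L₁ ∈ B, ∀ L₂ ∈ B, (L₁ ∩ L₂).card = 2 → symmDiff L₁ L₂ ∈ B

/-- The collinear triples: 3-element subsets contained in some line. -/
def collinearTriples (B : Set (Finset Ω)) : Set (Finset Ω) :=
  { t | t.card = 3 ∧ ∃ L ∈ B, t ⊆ L }

/-- `(Ω, C)` is a regular two-graph: `C` is a set of 3-element subsets, every 2-element
subset lies in exactly `μ` members of `C` for a constant `μ`, and every 4-element subset
contains exactly 0, 2 or 4 members of `C`. -/
def IsRegularTwoGraph (C : Set (Finset Ω)) : Prop :=
  (∀ t ∈ C, t.card = 3) ∧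
  (∃ μ : ℕ, ∀ p : Finset Ω, p.card = 2 → {t ∈ C | p ⊆ t}.ncard = μ) ∧
  (∀ q : Finset Ω, q.card = 4 →
    {t ∈ C | t ⊆ q}.ncard = 0 ∨ {t ∈ C | t ⊆ q}.ncard = 2 ∨ {t ∈ C | t ⊆ q}.ncard = 4)

/-- `mv a b` is the elementary move `[a,b]`: it is the identity when `a = b`; when `a ≠ b`
it interchanges `a` and `b`, interchanges `x` and `y` whenever `{a,b,x,y}` is a line, and
fixes every point not collinear with `a, b`. -/
def IsElemMoveFn [DecidableEq Ω] (B : Set (Finset Ω)) (mv : Ω → Ω → Equiv.Perm Ω) : Prop :=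
  (∀ a, mv a a = 1) ∧
  ∀ a b : Ω, a ≠ b →
    mv a b a = b ∧ mv a b b = a ∧
    (∀ x y : Ω, ({a, b, x, y} : Finset Ω) ∈ B → mv a b x = y) ∧
    (∀ x : Ω, x ≠ a → x ≠ b → (∀ L ∈ B, ¬(a ∈ L ∧ b ∈ L ∧ x ∈ L)) → mv a b x = x)

/-- The move sequence `[a, b₁, …, b_k] = [a,b₁][b₁,b₂]⋯[b_{k-1},b_k]`; the factors are
applied left-to-right (so in Lean's convention the product is reversed). -/
def moveSeq (mv : Ω → Ω → Equiv.Perm Ω) : Ω → List Ω → Equiv.Perm Ω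
  | _, [] => 1
  | a, b :: l => moveSeq mv b l * mv a b

/-- The Conway groupoid `L_x(D)`: all move sequences starting at `x`. -/
def ConwayGroupoid (mv : Ω → Ω → Equiv.Perm Ω) (x : Ω) : Set (Equiv.Perm Ω) :=
  { g | ∃ l : List Ω, g = moveSeq mv x l }

/-- The hole stabilizer `π_x(D)`: all move sequences starting and ending at `x`. -/
def holeStabilizer (mv : Ω → Ω → Equiv.Perm Ω) (x : Ω) : Set (Equiv.Perm Ω) :=
  { g | ∃ l : List Ω, g = moveSeq mv x (l ++ [x]) }

/-- `L(D)`: the set of all move sequences. -/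
def allMoveSeqs (mv : Ω → Ω → Equiv.Perm Ω) : Set (Equiv.Perm Ω) :=
  { g | ∃ (a : Ω) (l : List Ω), g = moveSeq mv a l }

/-- The set `E` of elementary moves `[a,b]` with `a ≠ b`. -/
def elemMoves (mv : Ω → Ω → Equiv.Perm Ω) : Set (Equiv.Perm Ω) :=
  { g | ∃ a b : Ω, a ≠ b ∧ g = mv a b }

/-- `\overline{x,y}`: the set of points lying on a common line with `x` and `y`. -/
def lineJoin (B : Set (Finset Ω)) (x y : Ω) : Set Ω :=
  { z | ∃ L ∈ B, x ∈ L ∧ y ∈ L ∧ z ∈ L }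

/-- A set `G` of permutations is transitive on `S`. -/
def SetTransitiveOn (G : Set (Equiv.Perm Ω)) (S : Set Ω) : Prop :=
  ∀ x ∈ S, ∀ y ∈ S, ∃ g ∈ G, g x = y

/-- `Δ` is a block for the set `G` of permutations. -/
def SetIsBlock (G : Set (Equiv.Perm Ω)) (Δ : Set Ω) : Prop :=
  ∀ g ∈ G, (⇑g) '' Δ = Δ ∨ Disjoint ((⇑g) '' Δ) Δ

/-- A set `G` of permutations is primitive on `S`: it is transitive on `S` and every
block contained in `S` is trivial (equivalently, the only invariant partitions are the
partition into singletons and the one-part partition). -/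
def SetPrimitiveOn (G : Set (Equiv.Perm Ω)) (S : Set Ω) : Prop :=
  SetTransitiveOn G S ∧
  ∀ Δ : Set Ω, Δ ⊆ S → SetIsBlock G Δ → Δ.Subsingleton ∨ Δ = S

/-- Primitivity on all of `Ω`. -/
def SetPrimitive (G : Set (Equiv.Perm Ω)) : Prop :=
  SetPrimitiveOn G Set.univ

/-- `(G, E)` is a 3-transposition group: `G` is the group generated by `E`, `E` is a
union of `G`-conjugacy classes of involutions, and any product of two members of `E`
has order 1, 2 or 3. -/
def Is3TranspositionGroup (G E : Set (Equiv.Perm Ω)) : Prop :=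
  ((Subgroup.closure E : Subgroup (Equiv.Perm Ω)) : Set (Equiv.Perm Ω)) = G ∧
  (∀ e ∈ E, orderOf e = 2) ∧
  (∀ g ∈ G, ∀ e ∈ E, g * e * g⁻¹ ∈ E) ∧
  (∀ g ∈ E, ∀ h ∈ E, orderOf (g * h) = 1 ∨ orderOf (g * h) = 2 ∨ orderOf (g * h) = 3)

/-- Two designs are isomorphic: a bijection of the point sets carrying lines to lines. -/
def DesignIso {Ω₁ Ω₂ : Type*} (B₁ : Set (Finset Ω₁)) (B₂ : Set (Finset Ω₂)) : Prop :=
  ∃ e : Ω₁ ≃ Ω₂, ∀ L : Finset Ω₁, L ∈ B₁ ↔ L.map e.toEmbedding ∈ B₂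

/-- The lines of the Boolean quadruple system of order `2^m`: 4-subsets of `F_2^m`
summing to zero. -/
def booleanLines (m : ℕ) : Set (Finset (Fin m → ZMod 2)) :=
  { L | L.card = 4 ∧ ∑ v ∈ L, v = 0 }

/-- `V = F_2^{2m}`, with coordinates indexed by `Fin m ⊕ Fin m`. -/
abbrev Vsp (m : ℕ) := (Fin m ⊕ Fin m) → ZMod 2

/-- `θ(u) = u e uᵀ` where `e` is the block matrix `(0 I; 0 0)`. -/
def theta {m : ℕ} (u : Vsp m) : ZMod 2 :=
  ∑ i : Fin m, u (Sum.inl i) * u (Sum.inr i)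

/-- The lines of the design `D^a`: 4-subsets of `V` summing to zero on which `θ` sums
to zero. -/
def linesA (m : ℕ) : Set (Finset (Vsp m)) :=
  { L | L.card = 4 ∧ ∑ v ∈ L, v = 0 ∧ ∑ v ∈ L, theta v = 0 }

/-- The lines of the design `D^ε`: 4-subsets of `{v ∈ V : θ(v) = ε}` summing to zero. -/
def linesEps (m : ℕ) (ε : ZMod 2) : Set (Finset {v : Vsp m // theta v = ε}) :=
  { L | L.card = 4 ∧ ∑ v ∈ L, (v : Vsp m) = 0 }

/-- The derived graph `G_{D,∞}`: vertices are the points other than `∞`, with `a, b`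
adjacent iff `{∞,a,b}` is a collinear triple. -/
def derivedGraph [DecidableEq Ω] (B : Set (Finset Ω)) (inf : Ω) :
    SimpleGraph {x : Ω // x ≠ inf} where
  Adj a b := a ≠ b ∧ ({inf, (a : Ω), (b : Ω)} : Finset Ω) ∈ collinearTriples B
  symm := by
    refine ⟨?_⟩
    rintro a b ⟨hab, h⟩
    exact ⟨hab.symm, by rwa [Finset.pair_comm (b : Ω) (a : Ω)]⟩
  loopless := by refine ⟨?_⟩; rintro a ⟨h, -⟩; exact h rfl

/-- `w` witnesses the triangle property for the edge `{u,v}`: `w` is a common neighbour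
of `u` and `v`, and every other vertex is adjacent to exactly one or three of `u,v,w`. -/
def TriangleWitness {V : Type*} (G : SimpleGraph V) (u v w : V) : Prop :=
  G.Adj u w ∧ G.Adj v w ∧
  ∀ x : V, x ∉ ({u, v, w} : Set V) →
    ({y ∈ ({u, v, w} : Set V) | G.Adj x y}.ncard = 1 ∨
     {y ∈ ({u, v, w} : Set V) | G.Adj x y}.ncard = 3)

/-- The triangle property for a graph. -/
def HasTriangleProperty {V : Type*} (G : SimpleGraph V) : Prop :=
  (∃ u v, G.Adj u v) ∧ ∀ u v : V, G.Adj u v → ∃ w, TriangleWitness G u v w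

/-- The strong triangle property: each edge has a unique triangle-property witness. -/
def HasStrongTriangleProperty {V : Type*} (G : SimpleGraph V) : Prop :=
  (∃ u v, G.Adj u v) ∧ ∀ u v : V, G.Adj u v → ∃! w, TriangleWitness G u v w

/-- A coherent 4-subset: all four of its 3-element subsets lie in `C`. -/
def IsCoherent (C : Set (Finset Ω)) (q : Finset Ω) : Prop :=
  q.card = 4 ∧ ∀ t ⊆ q, t.card = 3 → t ∈ C

/-! In `F₂^m` three distinct points `a, b, c` lie on the line `{a, b, c, a + b + c}`, so every
triple is collinear and the collinear triples form the complete two-graph. Since every vector is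
its own negative, the sum over a symmetric difference of lines is the sum of the two line sums,
which gives (△). The same line shows that the elementary move `[a, b]` is the translation by
`a + b`, so a move sequence starting at `∞` and ending at `b` is the translation by `∞ + b`. -/

namespace ZModModule

variable {V : Type*} [AddCommGroup V] [Module (ZMod 2) V]

lemma add_add_cancel_right (a b : V) : a + b + b = a := by
  rw [add_assoc, add_self, add_zero]

lemma add_add_eq_left_iff (a b c : V) : a + b + c = a ↔ b = c := by
  rw [add_assoc, add_eq_left, add_eq_zero_iff_eq_neg, neg_eq_self]

lemma sum_symmDiff_eq_add {α : Type*} [DecidableEq α] (s t : Finset α) (f : α → V) :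
    ∑ x ∈ symmDiff s t, f x = ∑ x ∈ s, f x + ∑ x ∈ t, f x := by
  rw [symmDiff_eq_sup_sdiff_inf, ← Finset.sum_union_inter, Finset.sup_eq_union,
    Finset.inf_eq_inter, ← Finset.sum_sdiff (Finset.inter_subset_union (s := s)), add_assoc,
    add_self, add_zero]

lemma addRight_mul_self (w : V) : Equiv.addRight w * Equiv.addRight w = 1 := by
  rw [← Equiv.addRight_add, add_self, Equiv.addRight_zero]

end ZModModule

lemma setOf_forall_apply_eq_add {V : Type*} [AddGroup V] :
    { g : Equiv.Perm V | ∃ w, ∀ v, g v = v + w } = Set.range Equiv.addRight := by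
  ext g
  exact exists_congr fun w => ⟨fun h => (Equiv.ext h).symm, fun h v => by rw [← h]; rfl⟩

lemma ncard_range_addRight {V : Type*} [AddGroup V] :
    (Set.range (Equiv.addRight : V → Equiv.Perm V)).ncard = Nat.card V :=
  Set.ncard_range_of_injective fun a b h => by
    simpa using congrArg (fun g : Equiv.Perm V => g 0) h

lemma ncard_setOf_card_three_superset [Fintype Ω] [DecidableEq Ω] {p : Finset Ω}
    (hp : p.card = 2) : {t : Finset Ω | t.card = 3 ∧ p ⊆ t}.ncard = Fintype.card Ω - 2 := by
  have hsupersets : {t : Finset Ω | t.card = 3 ∧ p ⊆ t} = (insert · p) '' (↑pᶜ : Set Ω) := by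
    ext t
    simp only [Set.mem_ofPred_eq, Set.mem_image, Finset.coe_compl, Set.mem_compl_iff,
      Finset.mem_coe]
    rw [Finset.exists_eq_insert_iff, hp]
    exact and_comm.trans (and_congr_right' eq_comm)
  have hinj : Set.InjOn (insert · p) (↑pᶜ : Set Ω) := fun x hx y _ hxy =>
    (Finset.insert_inj (by simpa using hx)).mp hxy
  rw [hsupersets, hinj.ncard_image, Set.ncard_coe_finset, Finset.card_compl, hp]

lemma ncard_setOf_card_three_subset {q : Finset Ω} (hq : q.card = 4) :
    {t : Finset Ω | t.card = 3 ∧ t ⊆ q}.ncard = 4 := by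
  have hsubsets : {t : Finset Ω | t.card = 3 ∧ t ⊆ q} = ↑(q.powersetCard 3) := by
    ext t
    simp [and_comm]
  rw [hsubsets, Set.ncard_coe_finset, Finset.card_powersetCard, hq]
  rfl

lemma isRegularTwoGraph_setOf_card_eq_three [Finite Ω] :
    IsRegularTwoGraph {t : Finset Ω | t.card = 3} := by
  classical
  have := Fintype.ofFinite Ω
  exact ⟨fun t ht => ht, ⟨_, fun p hp => ncard_setOf_card_three_superset hp⟩,
    fun q hq => Or.inr (Or.inr (ncard_setOf_card_three_subset hq))⟩

section Boolean

variable {m : ℕ}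

lemma insert_add_add_mem_booleanLines {a b c : Fin m → ZMod 2} (hab : a ≠ b) (hac : a ≠ c)
    (hbc : b ≠ c) : ({a, b, c, a + b + c} : Finset (Fin m → ZMod 2)) ∈ booleanLines m := by
  have had : a ≠ a + b + c := fun h => hbc ((ZModModule.add_add_eq_left_iff a b c).mp h.symm)
  have hbd : b ≠ a + b + c := fun h => hac <|
    (ZModModule.add_add_eq_left_iff b a c).mp ((show b + a + c = a + b + c by abel).trans h.symm)
  have hcd : c ≠ a + b + c := fun h => hab <|
    (ZModModule.add_add_eq_left_iff c a b).mp ((show c + a + b = a + b + c by abel).trans h.symm)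
  refine ⟨?_, ?_⟩
  · simp [Finset.card_insert_of_notMem, *]
  · rw [Finset.sum_insert (by simp [*]), Finset.sum_insert (by simp [*]),
      Finset.sum_insert (by simp [*]), Finset.sum_singleton,
      show a + (b + (c + (a + b + c))) = a + b + c + (a + b + c) by abel, ZModModule.add_self]

lemma collinearTriples_booleanLines :
    collinearTriples (booleanLines m) = {t | t.card = 3} := by
  ext t
  refine ⟨And.left, fun ht => ⟨ht, ?_⟩⟩
  obtain ⟨a, b, c, hab, hac, hbc, rfl⟩ := Finset.card_eq_three.mp ht
  exact ⟨_, insert_add_add_mem_booleanLines hab hac hbc, by simp [Finset.insert_subset_iff]⟩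

lemma symmDiffCond_booleanLines (m : ℕ) : SymmDiffCond (booleanLines m) := by
  rintro L₁ ⟨hcard₁, hsum₁⟩ L₂ ⟨hcard₂, hsum₂⟩ hinter
  refine ⟨?_, by rw [ZModModule.sum_symmDiff_eq_add, hsum₁, hsum₂, add_zero]⟩
  have hunion := Finset.card_union_add_card_inter L₁ L₂
  rw [symmDiff_eq_sup_sdiff_inf, Finset.sup_eq_union, Finset.inf_eq_inter,
    Finset.card_sdiff_of_subset Finset.inter_subset_union]
  omega

variable {mv : (Fin m → ZMod 2) → (Fin m → ZMod 2) → Equiv.Perm (Fin m → ZMod 2)}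

lemma IsElemMoveFn.booleanLines_apply (hmv : IsElemMoveFn (booleanLines m) mv)
    (a b v : Fin m → ZMod 2) : mv a b v = v + a + b := by
  by_cases hab : a = b
  · rw [hab, hmv.1, ZModModule.add_add_cancel_right]; rfl
  obtain ⟨hmv_a, hmv_b, hmv_line, -⟩ := hmv.2 a b hab
  by_cases hva : v = a
  · rw [hva, hmv_a, ZModModule.add_self, zero_add]
  by_cases hvb : v = b
  · rw [hvb, hmv_b, add_right_comm, ZModModule.add_self, zero_add]
  apply hmv_line
  rw [show v + a + b = a + b + v by abel]
  exact insert_add_add_mem_booleanLines hab (Ne.symm hva) (Ne.symm hvb)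

lemma IsElemMoveFn.booleanLines_moveSeq_apply (hmv : IsElemMoveFn (booleanLines m) mv)
    (l : List (Fin m → ZMod 2)) (a v : Fin m → ZMod 2) :
    moveSeq mv a l v = v + a + l.getLastD a := by
  induction l generalizing a v with
  | nil => rw [moveSeq, List.getLastD_nil, ZModModule.add_add_cancel_right]; rfl
  | cons b l ih =>
    rw [moveSeq, Equiv.Perm.mul_apply, ih, hmv.booleanLines_apply, List.getLastD_cons,
      ZModModule.add_add_cancel_right]

lemma IsElemMoveFn.booleanLines_holeStabilizer (hmv : IsElemMoveFn (booleanLines m) mv)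
    (x : Fin m → ZMod 2) : holeStabilizer mv x = {1} := by
  have hloop (l : List (Fin m → ZMod 2)) : moveSeq mv x (l ++ [x]) = 1 := Equiv.ext fun v => by
    rw [hmv.booleanLines_moveSeq_apply, List.getLastD_concat, ZModModule.add_add_cancel_right]
    rfl
  refine Set.eq_singleton_iff_unique_mem.mpr ⟨⟨[], (hloop []).symm⟩, ?_⟩
  rintro _ ⟨l, rfl⟩
  exact hloop l

lemma IsElemMoveFn.booleanLines_conwayGroupoid (hmv : IsElemMoveFn (booleanLines m) mv)
    (x : Fin m → ZMod 2) : ConwayGroupoid mv x = Set.range Equiv.addRight := by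
  ext g
  constructor
  · rintro ⟨l, rfl⟩
    refine ⟨x + l.getLastD x, Equiv.ext fun v => ?_⟩
    rw [hmv.booleanLines_moveSeq_apply, add_assoc]
    rfl
  · rintro ⟨w, rfl⟩
    refine ⟨[x + w], Equiv.ext fun v => ?_⟩
    rw [hmv.booleanLines_moveSeq_apply, List.getLastD_cons, List.getLastD_nil,
      ZModModule.add_add_add_cancel]
    rfl

end Boolean

theorem boolean_properties_general (m : ℕ)
    (mv : (Fin m → ZMod 2) → (Fin m → ZMod 2) → Equiv.Perm (Fin m → ZMod 2))
    (hmv : IsElemMoveFn (booleanLines m) mv) (inf : Fin m → ZMod 2) :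
    (∀ t : Finset (Fin m → ZMod 2), t.card = 3 → t ∈ collinearTriples (booleanLines m)) ∧
    IsRegularTwoGraph (collinearTriples (booleanLines m)) ∧
    SymmDiffCond (booleanLines m) ∧
    holeStabilizer mv inf = {1} ∧
    ConwayGroupoid mv inf =
      { g : Equiv.Perm (Fin m → ZMod 2) | ∃ w, ∀ v, g v = v + w } ∧
    (ConwayGroupoid mv inf).ncard = 2 ^ m ∧
    (∀ g ∈ ConwayGroupoid mv inf, g * g = 1) ∧
    (∀ g ∈ ConwayGroupoid mv inf, ∀ h ∈ ConwayGroupoid mv inf,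
      g * h = h * g ∧ g * h ∈ ConwayGroupoid mv inf) := by
  rw [collinearTriples_booleanLines, hmv.booleanLines_conwayGroupoid, setOf_forall_apply_eq_add,
    ncard_range_addRight]
  refine ⟨fun t ht => ht, isRegularTwoGraph_setOf_card_eq_three, symmDiffCond_booleanLines m,
    hmv.booleanLines_holeStabilizer inf, rfl, by simp, ?_, ?_⟩
  · rintro _ ⟨w, rfl⟩
    exact ZModModule.addRight_mul_self w
  · rintro _ ⟨a, rfl⟩ _ ⟨b, rfl⟩
    rw [← Equiv.addRight_add, ← Equiv.addRight_add, add_comm]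
    exact ⟨rfl, _, rfl⟩

/-- Lemma 2.12: in the Boolean quadruple system `D^b` of order `2^m`
(`m ≥ 2`): every 3-subset is collinear, so the collinear triples form a regular
two-graph; `D^b` satisfies (△); and for any `∞`, the hole stabilizer is trivial and
the Conway groupoid is the elementary abelian group of order `2^m` consisting of all
translations of `F_2^m`. -/
theorem boolean_properties (m : ℕ) (hm : 2 ≤ m)
    (mv : (Fin m → ZMod 2) → (Fin m → ZMod 2) → Equiv.Perm (Fin m → ZMod 2))
    (hmv : IsElemMoveFn (booleanLines m) mv) (inf : Fin m → ZMod 2) :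
    (∀ t : Finset (Fin m → ZMod 2), t.card = 3 → t ∈ collinearTriples (booleanLines m)) ∧
    IsRegularTwoGraph (collinearTriples (booleanLines m)) ∧
    SymmDiffCond (booleanLines m) ∧
    holeStabilizer mv inf = {1} ∧
    ConwayGroupoid mv inf =
      { g : Equiv.Perm (Fin m → ZMod 2) | ∃ w, ∀ v, g v = v + w } ∧
    (ConwayGroupoid mv inf).ncard = 2 ^ m ∧
    (∀ g ∈ ConwayGroupoid mv inf, g * g = 1) ∧
    (∀ g ∈ ConwayGroupoid mv inf, ∀ h ∈ ConwayGroupoid mv inf,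
      g * h = h * g ∧ g * h ∈ ConwayGroupoid mv inf) :=
  boolean_properties_general m mv hmv inf
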